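/- arXiv:2509.01832 — 2 statements merged into one kernel-verified Lean document; each statement's English description precedes it below -/
import Mathlib

section
/- Correctness of resilience-based assume-guarantee contracts for two interconnected subsystems (Theorem 1, fixed-point form): Let f1 : ℝ^{n1} → ℝ^{n1}, f2 : ℝ^{n2} → ℝ^{n2}, let C12 : ℝ^{n2} → ℝ^{n1} and C21 : ℝ^{n1} → ℝ^{n2} be linear maps, let N ∈ ℕ be a horizon, let ψ1 be a specification over horizon N in ℝ^{n1} and ψ2 a specification over horizon N in ℝ^{n2}, let ε1, ε2 ≥ 0, and let x̄1 ∈ ℝ^{n1}, x̄2 ∈ ℝ^{n2}. Assume: (H1) every trajectory x1 ∈ ξ1(x̄1, ε1) of the system f1 satisfies x1 ∈ ψ1 and ‖C21 x1(k)‖∞ ≤ ε2 for all k ∈ {0,…,N}; (H2) every trajectory x2 ∈ ξ2(x̄2, ε2) of the system f2 satisfies x2 ∈ ψ2 and ‖C12 x2(k)‖∞ ≤ ε1 for all k ∈ {0,…,N}. Then the closed-loop trajectories x1 : {0,…,N} → ℝ^{n1}, x2 : {0,…,N} → ℝ^{n2} defined by x1(0) = x̄1, x2(0) = x̄2, x1(k+1)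 = f1(x1(k)) + C12 x2(k), x2(k+1) = f2(x2(k)) + C21 x1(k) satisfy x1 ∈ ψ1 and x2 ∈ ψ2, and moreover ‖C12 x2(k)‖∞ ≤ ε1 and ‖C21 x1(k)‖∞ ≤ ε2 for all k ∈ {0,…,N}. -/
open scoped NNReal ENNReal

/-- The state trajectory of the discrete-time system `x(k+1) = f(x(k)) + w(k)`
starting from `x0` under the disturbance sequence `w`. -/
def traj {n : ℕ} (f : (Fin n → ℝ) → (Fin n → ℝ)) (x0 : Fin n → ℝ)
    (w : ℕ → Fin n → ℝ) : ℕ → Fin n → ℝ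
  | 0 => x0
  | k + 1 => f (traj f x0 w k) + w k

/-- `xi f N x0 ε` is the set of all state trajectories over the horizon `{0,…,N}`
starting from `x0` under disturbance sequences bounded by `ε` in the sup-norm
(the norm on `Fin n → ℝ` is the sup-norm). -/
def xi {n : ℕ} (f : (Fin n → ℝ) → (Fin n → ℝ)) (N : ℕ) (x0 : Fin n → ℝ)
    (ε : ℝ≥0) : Set (Fin (N + 1) → Fin n → ℝ) :=
  { x | ∃ w : ℕ → Fin n → ℝ, (∀ k < N, ‖w k‖ ≤ (ε : ℝ)) ∧
      ∀ k : Fin (N + 1), x k = traj f x0 w (k : ℕ) }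

/-- Correctness of resilience-based assume-guarantee contracts for two
interconnected subsystems (Theorem 1, fixed-point form). -/
theorem two_subsystem_contracts_correct {n1 n2 N : ℕ}
    (f1 : (Fin n1 → ℝ) → (Fin n1 → ℝ)) (f2 : (Fin n2 → ℝ) → (Fin n2 → ℝ))
    (C12 : (Fin n2 → ℝ) →ₗ[ℝ] (Fin n1 → ℝ)) (C21 : (Fin n1 → ℝ) →ₗ[ℝ] (Fin n2 → ℝ))
    (ψ1 : Set (Fin (N + 1) → Fin n1 → ℝ)) (ψ2 : Set (Fin (N + 1) → Fin n2 → ℝ))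
    (ε1 ε2 : ℝ≥0) (xb1 : Fin n1 → ℝ) (xb2 : Fin n2 → ℝ)
    (H1 : ∀ x1 ∈ xi f1 N xb1 ε1, x1 ∈ ψ1 ∧
      ∀ k : Fin (N + 1), ‖C21 (x1 k)‖ ≤ (ε2 : ℝ))
    (H2 : ∀ x2 ∈ xi f2 N xb2 ε2, x2 ∈ ψ2 ∧
      ∀ k : Fin (N + 1), ‖C12 (x2 k)‖ ≤ (ε1 : ℝ))
    -- the closed-loop trajectories
    (x1 : ℕ → Fin n1 → ℝ) (x2 : ℕ → Fin n2 → ℝ)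
    (hx1_0 : x1 0 = xb1) (hx2_0 : x2 0 = xb2)
    (hx1 : ∀ k, x1 (k + 1) = f1 (x1 k) + C12 (x2 k))
    (hx2 : ∀ k, x2 (k + 1) = f2 (x2 k) + C21 (x1 k)) :
    (fun k : Fin (N + 1) => x1 (k : ℕ)) ∈ ψ1 ∧
    (fun k : Fin (N + 1) => x2 (k : ℕ)) ∈ ψ2 ∧
    (∀ k : Fin (N + 1), ‖C12 (x2 (k : ℕ))‖ ≤ (ε1 : ℝ)) ∧
    (∀ k : Fin (N + 1), ‖C21 (x1 (k : ℕ))‖ ≤ (ε2 : ℝ)) := by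

  have key : ∀ k, k ≤ N → ‖C12 (x2 k)‖ ≤ (ε1 : ℝ) ∧ ‖C21 (x1 k)‖ ≤ (ε2 : ℝ) := by
    intro k
    induction k using Nat.strong_induction_on with
    | _ k IH =>
      intro hk
      set w1 : ℕ → Fin n1 → ℝ := fun j => if j < k then C12 (x2 j) else 0 with hw1def
      set w2 : ℕ → Fin n2 → ℝ := fun j => if j < k then C21 (x1 j) else 0 with hw2def
      have hagree1 : ∀ j ≤ k, traj f1 xb1 w1 j = x1 j := by
        intro j hj
        induction j with
        | zero => simpa [traj] using hx1_0.symm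
        | succ j ih =>
          have hjk : j < k := hj
          rw [traj, ih (le_of_lt hjk), hx1, hw1def]
          simp [hjk]
      have hagree2 : ∀ j ≤ k, traj f2 xb2 w2 j = x2 j := by
        intro j hj
        induction j with
        | zero => simpa [traj] using hx2_0.symm
        | succ j ih =>
          have hjk : j < k := hj
          rw [traj, ih (le_of_lt hjk), hx2, hw2def]
          simp [hjk]
      have hb1 : ∀ j < N, ‖w1 j‖ ≤ (ε1 : ℝ) := by
        intro j _
        by_cases h : j < k
        · simpa [hw1def, h] using (IH j h (le_trans (le_of_lt h) hk)).1
        · simp [hw1def, h, ε1.coe_nonneg]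
      have hb2 : ∀ j < N, ‖w2 j‖ ≤ (ε2 : ℝ) := by
        intro j _
        by_cases h : j < k
        · simpa [hw2def, h] using (IH j h (le_trans (le_of_lt h) hk)).2
        · simp [hw2def, h, ε2.coe_nonneg]
      have hmem1 : (fun i : Fin (N + 1) => traj f1 xb1 w1 (i : ℕ)) ∈ xi f1 N xb1 ε1 :=
        ⟨w1, hb1, fun i => rfl⟩
      have hmem2 : (fun i : Fin (N + 1) => traj f2 xb2 w2 (i : ℕ)) ∈ xi f2 N xb2 ε2 :=
        ⟨w2, hb2, fun i => rfl⟩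
      have h1 := (H1 _ hmem1).2 ⟨k, Nat.lt_succ_of_le hk⟩
      have h2 := (H2 _ hmem2).2 ⟨k, Nat.lt_succ_of_le hk⟩
      rw [show ((⟨k, Nat.lt_succ_of_le hk⟩ : Fin (N+1)) : ℕ) = k from rfl] at h1 h2
      rw [hagree1 k le_rfl] at h1
      rw [hagree2 k le_rfl] at h2
      exact ⟨h2, h1⟩
  -- full closed-loop trajectories are admissible
  have hb1 : ∀ j < N, ‖(fun j => C12 (x2 j) : ℕ → Fin n1 → ℝ) j‖ ≤ (ε1 : ℝ) :=
    fun j hj => (key j (le_of_lt hj)).1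
  have hb2 : ∀ j < N, ‖(fun j => C21 (x1 j) : ℕ → Fin n2 → ℝ) j‖ ≤ (ε2 : ℝ) :=
    fun j hj => (key j (le_of_lt hj)).2
  have hagree1 : ∀ j, x1 j = traj f1 xb1 (fun j => C12 (x2 j)) j := by
    intro j
    induction j with
    | zero => simpa [traj] using hx1_0
    | succ j ih => rw [traj, ← ih, hx1]
  have hagree2 : ∀ j, x2 j = traj f2 xb2 (fun j => C21 (x1 j)) j := by
    intro j
    induction j with
    | zero => simpa [traj] using hx2_0
    | succ j ih => rw [traj, ← ih, hx2]
  have hmem1 : (fun i : Fin (N + 1) => x1 (i : ℕ)) ∈ xi f1 N xb1 ε1 :=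
    ⟨_, hb1, fun i => hagree1 i⟩
  have hmem2 : (fun i : Fin (N + 1) => x2 (i : ℕ)) ∈ xi f2 N xb2 ε2 :=
    ⟨_, hb2, fun i => hagree2 i⟩
  exact ⟨(H1 _ hmem1).1, (H2 _ hmem2).1,
    fun i => (key i (Nat.lt_succ_iff.mp i.isLt)).1,
    fun i => (key i (Nat.lt_succ_iff.mp i.isLt)).2⟩
end

section
/- Correctness of resilience-based assume-guarantee contracts for L interconnected subsystems (Theorem 4, fixed-point form): Let L ∈ ℕ, and for each i ∈ {1,…,L} let f_i : ℝ^{n_i} → ℝ^{n_i}, let 𝓛_i ⊆ {1,…,L}∖{i} be the in-neighbor set, and for each ℓ ∈ 𝓛_i let C_{i,ℓ} : ℝ^{n_ℓ} → ℝ^{n_i} be a linear map. Let N ∈ ℕ, let ψ_i be a specification over horizon N in ℝ^{n_i}, let ε_i ≥ 0, let x̄_i ∈ ℝ^{n_i}, and let weights λ_ℓ^i ≥ 0 (for ℓ ∈ 𝓛_i) satisfy ∑_{ℓ ∈ 𝓛_i} λ_ℓ^i = 1. Assume for each i: every trajectory x_i ∈ ξ_i(x̄_i, ε_i) of the system f_i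 satisfies x_i ∈ ψ_i and, for every j ∈ {1,…,L} with i ∈ 𝓛_j, ‖C_{j,i} x_i(k)‖∞ ≤ λ_i^j ε_j for all k ∈ {0,…,N}. Then the closed-loop trajectories defined by x_i(0) = x̄_i and x_i(k+1) = f_i(x_i(k)) + ∑_{ℓ ∈ 𝓛_i} C_{i,ℓ} x_ℓ(k) satisfy x_i ∈ ψ_i for every i ∈ {1,…,L}. -/
open scoped NNReal ENNReal

/-- `traj` at time `k` depends only on disturbances at times `< k`. -/
lemma traj_congr {n : ℕ} (f : (Fin n → ℝ) → (Fin n → ℝ)) (x0 : Fin n → ℝ)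
    (w w' : ℕ → Fin n → ℝ) (k : ℕ) (h : ∀ m < k, w m = w' m) :
    traj f x0 w k = traj f x0 w' k := by
  induction k with
  | zero => rfl
  | succ k ih =>
    simp only [traj, ih (fun m hm => h m (Nat.lt_succ_of_lt hm)),
      h k (Nat.lt_succ_self k)]

/-- Correctness of resilience-based assume-guarantee contracts for a network of
`L` interconnected subsystems (Theorem 4, fixed-point form). -/
theorem L_subsystem_contracts_correct {L N : ℕ} (n : Fin L → ℕ)
    (f : ∀ i, (Fin (n i) → ℝ) → (Fin (n i) → ℝ))
    (𝓛 : Fin L → Finset (Fin L)) (h𝓛 : ∀ i, i ∉ 𝓛 i)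
    (C : ∀ i ℓ : Fin L, (Fin (n ℓ) → ℝ) →ₗ[ℝ] (Fin (n i) → ℝ))
    (ψ : ∀ i, Set (Fin (N + 1) → Fin (n i) → ℝ))
    (ε : Fin L → ℝ≥0) (xb : ∀ i, Fin (n i) → ℝ)
    (lam : Fin L → Fin L → ℝ≥0)
    (hlam : ∀ i, ∑ ℓ ∈ 𝓛 i, lam i ℓ = 1)
    (H : ∀ i, ∀ xt ∈ xi (f i) N (xb i) (ε i), xt ∈ ψ i ∧
      ∀ j : Fin L, i ∈ 𝓛 j →
        ∀ k : Fin (N + 1), ‖C j i (xt k)‖ ≤ (lam j i * ε j : ℝ≥0))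
    -- the closed-loop trajectories
    (x : ∀ i, ℕ → Fin (n i) → ℝ)
    (hx0 : ∀ i, x i 0 = xb i)
    (hx : ∀ i k, x i (k + 1) = f i (x i k) + ∑ ℓ ∈ 𝓛 i, C i ℓ (x ℓ k)) :
    ∀ i, (fun k : Fin (N + 1) => x i (k : ℕ)) ∈ ψ i := by
  -- the closed-loop disturbances
  set w : ∀ i, ℕ → Fin (n i) → ℝ := fun i k => ∑ ℓ ∈ 𝓛 i, C i ℓ (x ℓ k) with hw
  have hxt : ∀ i k, x i k = traj (f i) (xb i) (w i) k := by
    intro i k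
    induction k with
    | zero => simpa [traj] using hx0 i
    | succ k ih => simp [traj, ← ih, hx i k]; rfl
  -- key bound, by strong induction on k
  have key : ∀ k, k ≤ N → ∀ i, ‖w i k‖ ≤ (ε i : ℝ) := by
    intro k
    induction k using Nat.strong_induction_on with
    | _ k IH =>
      intro hk i
      have hbound : ∀ ℓ ∈ 𝓛 i, ‖C i ℓ (x ℓ k)‖ ≤ ((lam i ℓ * ε i : ℝ≥0) : ℝ) := by
        intro ℓ hℓ
        set w' : ℕ → Fin (n ℓ) → ℝ := fun m => if m < k then w ℓ m else 0 with hw'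
        have hmem : (fun j : Fin (N + 1) => traj (f ℓ) (xb ℓ) w' (j : ℕ)) ∈
            xi (f ℓ) N (xb ℓ) (ε ℓ) := by
          refine ⟨w', fun m hm => ?_, fun j => rfl⟩
          by_cases hmk : m < k
          · simpa [hw', hmk] using IH m hmk (le_of_lt hm) ℓ
          · simp [hw', hmk]
        obtain ⟨-, hg⟩ := H ℓ _ hmem
        have := hg i hℓ ⟨k, by omega⟩
        have heq : traj (f ℓ) (xb ℓ) w' k = x ℓ k := by
          rw [hxt ℓ k]
          exact traj_congr _ _ _ _ k (fun m hm => by simp [hw', hm])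
        simpa [heq] using this
      calc ‖w i k‖ ≤ ∑ ℓ ∈ 𝓛 i, ‖C i ℓ (x ℓ k)‖ := norm_sum_le _ _
        _ ≤ ∑ ℓ ∈ 𝓛 i, ((lam i ℓ * ε i : ℝ≥0) : ℝ) :=
            Finset.sum_le_sum hbound
        _ = (ε i : ℝ) := by
            push_cast
            rw [← Finset.sum_mul]
            rw [show (∑ ℓ ∈ 𝓛 i, ((lam i ℓ : ℝ))) = ((∑ ℓ ∈ 𝓛 i, lam i ℓ : ℝ≥0) : ℝ) by push_cast; ring]
            rw [hlam i]
            simp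
  intro i
  have hmem : (fun k : Fin (N + 1) => x i (k : ℕ)) ∈ xi (f i) N (xb i) (ε i) :=
    ⟨w i, fun k hk => key k (le_of_lt hk) i, fun k => hxt i k⟩
  exact (H i _ hmem).1
end
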